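/- arXiv:2001.10941 — 5 statements merged into one kernel-verified Lean document; each statement's English description precedes it below -/
import Mathlib

section
/- Let X be a pre-Riesz space and let V, W ⊆ X be vector subspaces each of which has generating cone (i.e. V = V₊ − V₊ and W = W₊ − W₊, where V₊ = V ∩ X₊ and W₊ = W ∩ X₊). If every element of V₊ is disjoint to every element of W₊, then every element of V is disjoint to every element of W. -/
open Pointwise

variable {X : Type*} [AddCommGroup X] [PartialOrder X] [IsOrderedAddMonoid X] [Module ℝ X]
  [PosSMulStrictMono ℝ X]

/-- Two elements of an ordered vector space are disjoint if the sets `{x+y, -x-y}` and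
`{x-y, y-x}` have the same set of upper bounds. -/
def UDisjoint (x y : X) : Prop :=
  upperBounds ({x + y, -x - y} : Set X) = upperBounds ({x - y, y - x} : Set X)

/-- The disjoint complement `S^⊥` of a set `S`. -/
def dComp (S : Set X) : Set X := {x : X | ∀ s ∈ S, UDisjoint x s}

/-- A band: a set equal to its double disjoint complement. -/
def IsBand (B : Set X) : Prop := B = dComp (dComp B)

/-- A projection band: a band `B` with `B ∩ B^⊥ = {0}` and `B + B^⊥ = X`. -/
def IsProjBand (B : Set X) : Prop :=
  IsBand B ∧ B ∩ dComp B = {0} ∧ ∀ x : X, ∃ b ∈ B, ∃ c ∈ dComp B, x = b + c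

/-- A positive linear operator. -/
def IsPosMap (T : X →ₗ[ℝ] X) : Prop := ∀ x : X, 0 ≤ x → 0 ≤ T x

/-- A band projection: a linear projection whose range is a projection band and whose
kernel is the disjoint complement of the range. -/
def IsBandProj (P : X →ₗ[ℝ] X) : Prop :=
  P ∘ₗ P = P ∧ IsProjBand (Set.range ⇑P) ∧ (LinearMap.ker P : Set X) = dComp (Set.range ⇑P)

/-- A pre-Riesz space: for every nonempty finite `A ⊆ X` and every `x`, if the upper bounds
of `x + A` are contained in the upper bounds of `A`, then `x ≥ 0`. -/
def IsPreRiesz (X : Type*) [AddCommGroup X] [PartialOrder X] [IsOrderedAddMonoid X] [Module ℝ X]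
    [PosSMulStrictMono ℝ X] : Prop :=
  ∀ (A : Set X) (x : X), A.Finite → A.Nonempty →
    upperBounds ((x + ·) '' A) ⊆ upperBounds A → 0 ≤ x

/-!
Write `v = a - b` and `w = c - d` with `a, b ∈ V₊` and `c, d ∈ W₊`. If `t` dominates `±(v + w)`,
then `t + (b + c)` dominates `±(a - d)`, so by `a ⊥ d` it dominates `a + d`, i.e. `v - w ≤ t`.
Replacing `v, w` by `±v, ±w` gives all four inequalities needed for `v ⊥ w`.
-/

section

variable {G : Type*} [AddCommGroup G] [PartialOrder G]

theorem udisjoint_iff {x y : G} :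
    UDisjoint x y ↔ ∀ t, x + y ≤ t ∧ -x - y ≤ t ↔ x - y ≤ t ∧ y - x ≤ t := by
  simp only [UDisjoint, Set.ext_iff, upperBounds_insert, upperBounds_singleton, Set.mem_inter_iff,
    Set.mem_Ici]

theorem forall_udisjoint_of_sub_le {V W : AddSubgroup G}
    (hsub : ∀ x ∈ V, ∀ y ∈ W, ∀ t, x + y ≤ t → -x - y ≤ t → x - y ≤ t) :
    ∀ x ∈ V, ∀ y ∈ W, UDisjoint x y := by
  intro x hx y hy
  refine udisjoint_iff.mpr fun t => ⟨fun ⟨h₁, h₂⟩ => ⟨?_, ?_⟩, fun ⟨h₁, h₂⟩ => ⟨?_, ?_⟩⟩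
  · exact hsub x hx y hy t h₁ h₂
  · simpa [sub_eq_add_neg, add_comm] using
      hsub (-x) (V.neg_mem hx) (-y) (W.neg_mem hy) t (by simpa [sub_eq_add_neg] using h₂)
        (by simpa [sub_eq_add_neg] using h₁)
  · simpa [sub_eq_add_neg] using
      hsub x hx (-y) (W.neg_mem hy) t (by simpa [sub_eq_add_neg] using h₁)
        (by simpa [sub_eq_add_neg, add_comm] using h₂)
  · simpa [sub_eq_add_neg] using
      hsub (-x) (V.neg_mem hx) y hy t (by simpa [sub_eq_add_neg, add_comm] using h₂)
        (by simpa [sub_eq_add_neg] using h₁)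

theorem UDisjoint.add_le {x y t : G} (h : UDisjoint x y) (h₁ : x - y ≤ t) (h₂ : y - x ≤ t) :
    x + y ≤ t :=
  ((udisjoint_iff.mp h t).mpr ⟨h₁, h₂⟩).1

variable [IsOrderedAddMonoid G]

theorem UDisjoint.sub_sub_le {a b c d t : G} (had : UDisjoint a d) (hb : 0 ≤ b) (hc : 0 ≤ c)
    (h₁ : a - b + (c - d) ≤ t) (h₂ : -(a - b) - (c - d) ≤ t) : a - b - (c - d) ≤ t := by
  have had₁ : a - d ≤ t + (b + c) :=
    calc a - d = (a - b + (c - d)) + (b + -c) := by abel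
      _ ≤ t + (b + c) := add_le_add h₁ (add_le_add_right (neg_le_self hc) b)
  have had₂ : d - a ≤ t + (b + c) :=
    calc d - a = (-(a - b) - (c - d)) + (-b + c) := by abel
      _ ≤ t + (b + c) := add_le_add h₂ (add_le_add_left (neg_le_self hb) c)
  calc a - b - (c - d) = (a + d) - (b + c) := by abel
    _ ≤ t + (b + c) - (b + c) := sub_le_sub_right (had.add_le had₁ had₂) _
    _ = t := add_sub_cancel_right t _

end

theorem stmt_0_general (V W : Submodule ℝ X)
    (hV : ∀ v ∈ V, ∃ a ∈ V, ∃ b ∈ V, 0 ≤ a ∧ 0 ≤ b ∧ v = a - b)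
    (hW : ∀ w ∈ W, ∃ a ∈ W, ∃ b ∈ W, 0 ≤ a ∧ 0 ≤ b ∧ w = a - b)
    (h : ∀ v ∈ V, 0 ≤ v → ∀ w ∈ W, 0 ≤ w → UDisjoint v w) :
    ∀ v ∈ V, ∀ w ∈ W, UDisjoint v w := by
  refine forall_udisjoint_of_sub_le (V := V.toAddSubgroup) (W := W.toAddSubgroup) ?_
  intro v hv w hw t h₁ h₂
  obtain ⟨a, haV, b, -, ha, hb, rfl⟩ := hV v hv
  obtain ⟨c, -, d, hdW, hc, hd, rfl⟩ := hW w hw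
  exact (h a haV ha d hdW hd).sub_sub_le hb hc h₁ (by simpa only [neg_sub'] using h₂)

/-- If `V` and `W` are subspaces with generating cone and `V₊ ⊥ W₊`, then `V ⊥ W`. -/
theorem stmt_0 (hX : IsPreRiesz X) (V W : Submodule ℝ X)
    (hV : ∀ v ∈ V, ∃ a ∈ V, ∃ b ∈ V, 0 ≤ a ∧ 0 ≤ b ∧ v = a - b)
    (hW : ∀ w ∈ W, ∃ a ∈ W, ∃ b ∈ W, 0 ≤ a ∧ 0 ≤ b ∧ w = a - b)
    (h : ∀ v ∈ V, 0 ≤ v → ∀ w ∈ W, 0 ≤ w → UDisjoint v w) :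
    ∀ v ∈ V, ∀ w ∈ W, UDisjoint v w :=
  stmt_0_general V W hV hW h
end

section
/- Let X be a pre-Riesz space and let B, C ⊆ X be bands. Then (a) B ∩ C = (B^⊥ + C^⊥)^⊥, where B^⊥ + C^⊥ denotes the set of all sums b + c with b ∈ B^⊥ and c ∈ C^⊥; and (b) (B + C)^⊥⊥ = (B^⊥ ∩ C^⊥)^⊥; in particular, if B + C is a band, then B + C = (B^⊥ ∩ C^⊥)^⊥. -/
/-!
Everything reduces to additivity of disjointness: `x ⊥ y` and `x ⊥ z` imply `x ⊥ (y + z)`.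
Then `(B + C)^⊥ = B^⊥ ∩ C^⊥` whenever `0 ∈ B` and `0 ∈ C`, and (a) and (b) follow by taking
complements and using `B = B^⊥⊥`, `C = C^⊥⊥`.

In a pre-Riesz space, `x ⊥ y` holds iff every upper bound of `±x, ±y` is an upper bound of
`±x ± y` (in a vector lattice: `|x| ∨ |y| = |x| + |y|`); both directions apply the pre-Riesz
property to a two-point set `{d, -d}` and halve. For additivity, let `v ≥ ±x, ±(y + z)` and apply
the pre-Riesz property to `P + Q`, where `P = {±x, ±y}` and `Q = {±x, ±z}`: an upper bound of
`v + P + Q` bounds `{±x, ±(y + z)} + P + Q`, hence, by the characterization applied to `P` and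
to `Q`, also the sets obtained by replacing `P` by `±x ± y` or `Q` by `±x ± z`, and three of
these sets together cover `x + (y + z) + P + Q`.
-/

open Pointwise

variable {X : Type*} [AddCommGroup X] [PartialOrder X] [IsOrderedAddMonoid X] [Module ℝ X]
    [PosSMulStrictMono ℝ X]

lemma mem_upperBounds_pair_iff {α : Type*} [Preorder α] {a b u : α} :
    u ∈ upperBounds {a, b} ↔ a ≤ u ∧ b ≤ u := by
  simp [upperBounds_insert]

lemma mem_upperBounds_add_iff {α : Type*} [Add α] [LE α] {A B : Set α} {v : α} :
    v ∈ upperBounds (A + B) ↔ ∀ a ∈ A, ∀ b ∈ B, a + b ≤ v :=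
  Set.forall_mem_image2

lemma upperBounds_add_subset_add {G : Type*} [AddCommGroup G] [PartialOrder G]
    [IsOrderedAddMonoid G] {A B : Set G} (h : upperBounds A ⊆ upperBounds B) (S : Set G) :
    upperBounds (A + S) ⊆ upperBounds (B + S) := by
  intro v hv
  rw [mem_upperBounds_add_iff] at hv ⊢
  intro b hb s hs
  have hvs : v - s ∈ upperBounds A := fun a ha => le_sub_iff_add_le.mpr (hv a ha s hs)
  exact le_sub_iff_add_le.mp (h hvs hb)

lemma pair_neg_neg {α : Type*} [InvolutiveNeg α] (a : α) : ({-a, - -a} : Set α) = {a, -a} := by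
  rw [neg_neg, Set.pair_comm]

section Disjoint

variable {E : Type*} [AddCommGroup E] [PartialOrder E]

lemma udisjoint_iff_s2 {x y : E} :
    UDisjoint x y ↔ upperBounds {x + y, -(x + y)} = upperBounds {x - y, -(x - y)} := by
  rw [UDisjoint, neg_add', neg_sub]

lemma UDisjoint.symm {x y : E} (h : UDisjoint x y) : UDisjoint y x := by
  rwa [UDisjoint, add_comm, neg_sub_comm, Set.pair_comm (y - x)]

lemma UDisjoint.neg_right {x y : E} (h : UDisjoint x y) : UDisjoint x (-y) := by
  rw [UDisjoint, sub_neg_eq_add, sub_neg_eq_add, ← sub_eq_add_neg, neg_add_eq_sub, neg_sub_comm]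
  exact Eq.symm h

lemma UDisjoint.neg_left {x y : E} (h : UDisjoint x y) : UDisjoint (-x) y :=
  h.symm.neg_right.symm

lemma udisjoint_zero_left (x : E) : UDisjoint 0 x := by
  simp [UDisjoint, Set.pair_comm]

lemma zero_mem_dComp (S : Set E) : (0 : E) ∈ dComp S :=
  fun s _ => udisjoint_zero_left s

lemma IsBand.zero_mem {B : Set E} (hB : IsBand B) : (0 : E) ∈ B := by
  rw [hB]
  exact zero_mem_dComp _

end Disjoint

lemma le_two_inv_smul_iff {E : Type*} [AddCommGroup E] [PartialOrder E] [Module ℝ E]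
    [PosSMulStrictMono ℝ E] {a m : E} : a ≤ (2⁻¹ : ℝ) • m ↔ a + a ≤ m := by
  rw [le_inv_smul_iff_of_pos two_pos, two_smul]

section PreRiesz

variable {E : Type*} [AddCommGroup E] [PartialOrder E] [IsOrderedAddMonoid E] [Module ℝ E]
  [PosSMulStrictMono ℝ E]

lemma le_of_add_le_of_sub_le {a b u : E} (h₁ : a + b ≤ u) (h₂ : a - b ≤ u) : a ≤ u := by
  have h : a + a ≤ u + u := (by abel : a + a = (a + b) + (a - b)).trans_le (add_le_add h₁ h₂)
  rwa [← le_two_inv_smul_iff, ← two_smul ℝ u, inv_smul_smul₀ two_ne_zero] at h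

lemma IsPreRiesz.le_of_upperBounds_subset (hX : IsPreRiesz E) {D : Set E} (hD : D.Finite)
    (hD' : D.Nonempty) {g u : E} (h : upperBounds ({u} + D) ⊆ upperBounds ({g} + D)) :
    g ≤ u := by
  have hshift : (u - g + ·) '' ({g} + D) = {u} + D := by
    rw [Set.singleton_add, Set.singleton_add, Set.image_image]
    congr 1 with x
    abel
  refine sub_nonneg.mp (hX _ (u - g) ((Set.finite_singleton g).add hD)
    ((Set.singleton_nonempty g).add hD') ?_)
  rwa [hshift]

lemma IsPreRiesz.le_of_forall_pm (hX : IsPreRiesz E) {g u d : E}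
    (h : ∀ m, u + d ≤ m → u - d ≤ m → g + d ≤ m ∧ g - d ≤ m) : g ≤ u := by
  refine hX.le_of_upperBounds_subset (D := {d, -d}) (Set.toFinite _) (Set.insert_nonempty _ _)
    fun m hm => ?_
  simp only [Set.singleton_add, Set.image_insert_eq, Set.image_singleton, mem_upperBounds_pair_iff,
    ← sub_eq_add_neg] at hm ⊢
  exact h m hm.1 hm.2

lemma UDisjoint.add_le_s2 (hX : IsPreRiesz E) {x y u : E} (h : UDisjoint x y)
    (hx : u ∈ upperBounds {x, -x}) (hy : u ∈ upperBounds {y, -y}) : x + y ≤ u := by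
  rw [mem_upperBounds_pair_iff] at hx hy
  refine hX.le_of_forall_pm (d := x - y) fun m h₁ h₂ => ?_
  have h₃ : u + (x + y) ≤ m := by
    have hmu : m - u ∈ upperBounds {x - y, -(x - y)} := by
      rw [mem_upperBounds_pair_iff, le_sub_iff_add_le', le_sub_iff_add_le', ← sub_eq_add_neg]
      exact ⟨h₁, h₂⟩
    rw [← udisjoint_iff_s2.mp h, mem_upperBounds_pair_iff] at hmu
    exact le_sub_iff_add_le'.mp hmu.1
  constructor
  · refine (by abel : x + y + (x - y) = x + x).trans_le (le_of_add_le_of_sub_le (b := y) ?_ ?_)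
    · calc x + x + y = x + (x + y) := by abel
        _ ≤ u + (x + y) := by gcongr; exact hx.1
        _ ≤ m := h₃
    · calc x + x - y = x + (x - y) := by abel
        _ ≤ u + (x - y) := by gcongr; exact hx.1
        _ ≤ m := h₁
  · refine (by abel : x + y - (x - y) = y + y).trans_le (le_of_add_le_of_sub_le (b := x) ?_ ?_)
    · calc y + y + x = y + (x + y) := by abel
        _ ≤ u + (x + y) := by gcongr; exact hy.1
        _ ≤ m := h₃
    · calc y + y - x = y - (x - y) := by abel
        _ ≤ u - (x - y) := by gcongr; exact hy.1
        _ ≤ m := h₂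

lemma UDisjoint.upperBounds_subset (hX : IsPreRiesz E) {x y : E} (h : UDisjoint x y) :
    upperBounds ({x, -x} ∪ {y, -y}) ⊆ upperBounds ({x, -x} + {y, -y}) := by
  intro u hu
  rw [upperBounds_union] at hu
  obtain ⟨hx, hy⟩ := hu
  have hx' : u ∈ upperBounds {-x, - -x} := by rwa [pair_neg_neg]
  have hy' : u ∈ upperBounds {-y, - -y} := by rwa [pair_neg_neg]
  rw [mem_upperBounds_add_iff]
  rintro a (rfl | rfl) b (rfl | rfl)
  exacts [h.add_le_s2 hX hx hy, h.neg_right.add_le_s2 hX hx hy', h.neg_left.add_le_s2 hX hx' hy,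
    h.neg_left.neg_right.add_le_s2 hX hx' hy']

lemma sub_le_of_upperBounds_subset (hX : IsPreRiesz E) {x y u : E}
    (h : upperBounds ({x, -x} ∪ {y, -y}) ⊆ upperBounds ({x, -x} + {y, -y}))
    (hu : u ∈ upperBounds {x + y, -(x + y)}) : x - y ≤ u := by
  rw [mem_upperBounds_pair_iff] at hu
  refine hX.le_of_forall_pm (d := x - y) fun m h₁ h₂ => ?_
  have hhalf : (2⁻¹ : ℝ) • m ∈ upperBounds ({x, -x} ∪ {y, -y}) := by
    simp only [upperBounds_union, Set.mem_inter_iff, mem_upperBounds_pair_iff, le_two_inv_smul_iff]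
    refine ⟨⟨?_, ?_⟩, ?_, ?_⟩
    · calc x + x = x + y + (x - y) := by abel
        _ ≤ u + (x - y) := by gcongr; exact hu.1
        _ ≤ m := h₁
    · calc -x + -x = -(x + y) - (x - y) := by abel
        _ ≤ u - (x - y) := by gcongr; exact hu.2
        _ ≤ m := h₂
    · calc y + y = x + y - (x - y) := by abel
        _ ≤ u - (x - y) := by gcongr; exact hu.1
        _ ≤ m := h₂
    · calc -y + -y = -(x + y) + (x - y) := by abel
        _ ≤ u + (x - y) := by gcongr; exact hu.2
        _ ≤ m := h₁
  have hxy : x + -y ≤ (2⁻¹ : ℝ) • m :=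
    mem_upperBounds_add_iff.mp (h hhalf) x (by simp) (-y) (by simp)
  have hu₀ : 0 ≤ u := le_of_add_le_of_sub_le (b := x + y) (by rw [zero_add]; exact hu.1)
    (by rw [zero_sub]; exact hu.2)
  rw [← sub_eq_add_neg, le_two_inv_smul_iff] at hxy
  exact ⟨hxy, by simpa using hu₀.trans (le_of_add_le_of_sub_le h₁ h₂)⟩

lemma upperBounds_add_pair_subset_sub_pair (hX : IsPreRiesz E) {x y : E}
    (h : upperBounds ({x, -x} ∪ {y, -y}) ⊆ upperBounds ({x, -x} + {y, -y})) :
    upperBounds {x + y, -(x + y)} ⊆ upperBounds {x - y, -(x - y)} := by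
  intro u hu
  have hyx : upperBounds ({y, -y} ∪ {x, -x}) ⊆ upperBounds ({y, -y} + {x, -x}) := by
    rwa [Set.union_comm, add_comm]
  rw [mem_upperBounds_pair_iff, neg_sub]
  exact ⟨sub_le_of_upperBounds_subset hX h hu,
    sub_le_of_upperBounds_subset hX hyx (by rwa [add_comm])⟩

theorem udisjoint_iff_upperBounds_subset (hX : IsPreRiesz E) {x y : E} :
    UDisjoint x y ↔ upperBounds ({x, -x} ∪ {y, -y}) ⊆ upperBounds ({x, -x} + {y, -y}) := by
  refine ⟨(·.upperBounds_subset hX), fun h => udisjoint_iff_s2.mpr ?_⟩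
  have h' := upperBounds_add_pair_subset_sub_pair hX (x := x) (y := -y) (by rwa [pair_neg_neg])
  rw [← sub_eq_add_neg, sub_neg_eq_add] at h'
  exact (upperBounds_add_pair_subset_sub_pair hX h).antisymm h'

lemma UDisjoint.add_add_le (hX : IsPreRiesz E) {x y z v : E} (hy : UDisjoint x y)
    (hz : UDisjoint x z) (hx : v ∈ upperBounds {x, -x}) (hw : v ∈ upperBounds {y + z, -(y + z)}) :
    x + (y + z) ≤ v := by
  set P : Set E := {x, -x} ∪ {y, -y}
  set Q : Set E := {x, -x} ∪ {z, -z}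
  set T : Set E := {x, -x} ∪ {y + z, -(y + z)}
  set P' : Set E := {x, -x} + {y, -y}
  set Q' : Set E := {x, -x} + {z, -z}
  have hP := hy.upperBounds_subset hX
  have hQ := hz.upperBounds_subset hX
  refine hX.le_of_upperBounds_subset (D := P + Q) ((Set.toFinite P).add (Set.toFinite Q))
    ⟨x + x, Set.add_mem_add (by simp [P]) (by simp [Q])⟩ fun m hm => ?_
  have hT : upperBounds {v} ⊆ upperBounds T := fun b hb =>
    upperBounds_mono_mem (hb rfl) (by rw [upperBounds_union]; exact ⟨hx, hw⟩)
  have h₀ : m ∈ upperBounds (T + (P + Q)) := upperBounds_add_subset_add hT _ hm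
  have h₁ : m ∈ upperBounds (P' + (T + Q)) :=
    upperBounds_add_subset_add hP _ (by rwa [add_left_comm] at h₀)
  have h₂ : m ∈ upperBounds (Q' + (T + P)) :=
    upperBounds_add_subset_add hQ _ (by rwa [add_comm P, add_left_comm] at h₀)
  have h₃ : m ∈ upperBounds (Q' + (T + P')) :=
    upperBounds_add_subset_add hQ _ (by rwa [show Q + (T + P') = P' + (T + Q) by abel])
  have hxP : x ∈ ({x, -x} : Set E) := Set.mem_insert _ _
  have hwT : y + z ∈ T := Or.inr (Set.mem_insert _ _)
  rintro _ ⟨_, rfl, _, ⟨p, hp, q, hq, rfl⟩, rfl⟩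
  rcases hp with hp | hp
  · rcases hq with hq | hq
    · refine (by abel : x + (y + z) + (p + q) = q + z + (p + (x + y))).trans_le (h₃ ?_)
      exact Set.add_mem_add (Set.add_mem_add hq (Set.mem_insert _ _))
        (Set.add_mem_add (Or.inl hp) (Set.add_mem_add hxP (Set.mem_insert _ _)))
    · refine (by abel : x + (y + z) + (p + q) = x + q + (y + z + p)).trans_le (h₂ ?_)
      exact Set.add_mem_add (Set.add_mem_add hxP hq) (Set.add_mem_add hwT (Or.inl hp))
  · refine (by abel : x + (y + z) + (p + q) = x + p + (y + z + q)).trans_le (h₁ ?_)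
    exact Set.add_mem_add (Set.add_mem_add hxP hp) (Set.add_mem_add hwT hq)

theorem UDisjoint.add_right (hX : IsPreRiesz E) {x y z : E} (hy : UDisjoint x y)
    (hz : UDisjoint x z) : UDisjoint x (y + z) := by
  refine (udisjoint_iff_upperBounds_subset hX).mpr fun v hv => ?_
  rw [upperBounds_union] at hv
  obtain ⟨hx, hw⟩ := hv
  have hx' : v ∈ upperBounds {-x, - -x} := by rwa [pair_neg_neg]
  have hw' : v ∈ upperBounds {-y + -z, -(-y + -z)} := by rwa [← neg_add, pair_neg_neg]
  rw [mem_upperBounds_add_iff]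
  rintro a (rfl | rfl) b (rfl | rfl)
  · exact hy.add_add_le hX hz hx hw
  · simpa only [neg_add] using hy.neg_right.add_add_le hX hz.neg_right hx hw'
  · exact hy.neg_left.add_add_le hX hz.neg_left hx' hw
  · simpa only [neg_add] using hy.neg_left.neg_right.add_add_le hX hz.neg_left.neg_right hx' hw'

lemma dComp_add (hX : IsPreRiesz E) {B C : Set E} (hB : (0 : E) ∈ B) (hC : (0 : E) ∈ C) :
    dComp (B + C) = dComp B ∩ dComp C := by
  ext x
  constructor
  · intro hx
    exact ⟨fun b hb => by simpa using hx (b + 0) (Set.add_mem_add hb hC),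
      fun c hc => by simpa using hx (0 + c) (Set.add_mem_add hB hc)⟩
  · rintro ⟨hxB, hxC⟩ _ ⟨b, hb, c, hc, rfl⟩
    exact (hxB b hb).add_right hX (hxC c hc)

end PreRiesz

/-- For bands `B` and `C`: (a) `B ∩ C = (B^⊥ + C^⊥)^⊥`; (b) `(B+C)^⊥⊥ = (B^⊥ ∩ C^⊥)^⊥`,
and in particular if `B + C` is a band then `B + C = (B^⊥ ∩ C^⊥)^⊥`. -/
theorem stmt_2 (hX : IsPreRiesz X) (B C : Set X) (hB : IsBand B) (hC : IsBand C) :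
    B ∩ C = dComp (dComp B + dComp C) ∧
    dComp (dComp (B + C)) = dComp (dComp B ∩ dComp C) ∧
    (IsBand (B + C) → B + C = dComp (dComp B ∩ dComp C)) := by
  have hBC : dComp (dComp (B + C)) = dComp (dComp B ∩ dComp C) := by
    rw [dComp_add hX hB.zero_mem hC.zero_mem]
  refine ⟨?_, hBC, fun h => h.trans hBC⟩
  rw [dComp_add hX (zero_mem_dComp B) (zero_mem_dComp C), ← hB, ← hC]
end

section
/- Let X be a pre-Riesz space, let P₁, …, P_n be band projections on X and let x ∈ X₊. Then: (a) if z ∈ X satisfies z ≤ P₁x, …, z ≤ P_n x, then z ≤ P₁P₂⋯P_n x; and (b) P₁P₂⋯P_n x is the infimum of the set {P₁x, …, P_n x} in X. -/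
/-!
Write `x = P x + (x - P x)`; the second summand lies in the kernel of `P`, i.e. is disjoint from
the range of `P`. For disjoint `c, d` the upper bounds of `{c - d, d - c}` and of `{c + d, -c - d}`
agree, which forces `0 ≤ c, d` whenever `0 ≤ c + d` (so band projections are positive and below
the identity), and forces `z ≤ a` whenever `0 ≤ a`, `z ≤ d` and `z ≤ a + c`. Applied with
`a = P y`, `c = y - P y`, `d = P x` this is the induction step: a common lower bound `z` of `y`
and `P x` lies below `P y`. Inducting along the product shows that `P₁ ⋯ Pₙ x` is the greatest
lower bound of `x, P₁ x, …, Pₙ x`, and `x` is redundant in that list since `P₁ x ≤ x`.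
-/

open Pointwise

variable {X : Type*} [AddCommGroup X] [PartialOrder X] [IsOrderedAddMonoid X] [Module ℝ X]
  [PosSMulStrictMono ℝ X]

omit [IsOrderedAddMonoid X] in
theorem nonneg_of_add_self_nonneg {y : X} (h : 0 ≤ y + y) : 0 ≤ y := by
  rwa [← two_smul ℝ, smul_nonneg_iff_nonneg_of_pos_left two_pos] at h

namespace UDisjoint

variable {c d : X}

omit [Module ℝ X] [PosSMulStrictMono ℝ X] in
theorem le_iff (h : UDisjoint c d) {u : X} :
    c + d ≤ u ∧ -c - d ≤ u ↔ c - d ≤ u ∧ d - c ≤ u := by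
  simpa [upperBounds_insert] using congrArg (u ∈ ·) h

theorem nonneg_of_add_nonneg (h : UDisjoint c d) (hcd : 0 ≤ c + d) : 0 ≤ c ∧ 0 ≤ d := by
  have hneg : -c - d ≤ c + d := neg_add' c d ▸ neg_le_self hcd
  obtain ⟨h₁, h₂⟩ := h.le_iff.1 ⟨le_rfl, hneg⟩
  replace h₁ := sub_nonneg.2 h₁
  replace h₂ := sub_nonneg.2 h₂
  rw [show c + d - (c - d) = d + d by abel] at h₁
  rw [show c + d - (d - c) = c + c by abel] at h₂
  exact ⟨nonneg_of_add_self_nonneg h₂, nonneg_of_add_self_nonneg h₁⟩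

theorem le_of_le_of_le_add (h : UDisjoint c d) {a z : X} (ha : 0 ≤ a) (hzd : z ≤ d)
    (hzac : z ≤ a + c) : z ≤ a := by
  -- `2(a - z) + c + d` bounds `c - d` and `d - c`, hence also `c + d`.
  have hcd : c - d ≤ (a - z) + (a - z) + c + d := sub_nonneg.1 <| by
    convert add_nonneg (add_nonneg ha ha) (add_nonneg (sub_nonneg.2 hzd) (sub_nonneg.2 hzd))
      using 1
    abel
  have hdc : d - c ≤ (a - z) + (a - z) + c + d := sub_nonneg.1 <| by
    convert add_nonneg (sub_nonneg.2 hzac) (sub_nonneg.2 hzac) using 1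
    abel
  have hu := sub_nonneg.2 (h.le_iff.2 ⟨hcd, hdc⟩).1
  rw [show (a - z) + (a - z) + c + d - (c + d) = (a - z) + (a - z) by abel] at hu
  exact sub_nonneg.1 (nonneg_of_add_self_nonneg hu)

end UDisjoint

namespace IsBandProj

variable {P : X →ₗ[ℝ] X}

omit [IsOrderedAddMonoid X] [PosSMulStrictMono ℝ X] in
theorem apply_apply (hP : IsBandProj P) (y : X) : P (P y) = P y :=
  LinearMap.congr_fun hP.1 y

omit [IsOrderedAddMonoid X] [PosSMulStrictMono ℝ X] in
theorem udisjoint_sub_apply (hP : IsBandProj P) (y w : X) : UDisjoint (y - P y) (P w) := by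
  have hy : y - P y ∈ (LinearMap.ker P : Set X) := by simp [hP.apply_apply]
  exact (hP.2.2 ▸ hy) (P w) ⟨w, rfl⟩

theorem apply_nonneg_and_apply_le (hP : IsBandProj P) {x : X} (hx : 0 ≤ x) :
    0 ≤ P x ∧ P x ≤ x := by
  obtain ⟨hc, hPx⟩ := (hP.udisjoint_sub_apply x x).nonneg_of_add_nonneg (by rwa [sub_add_cancel])
  exact ⟨hPx, sub_nonneg.1 hc⟩

theorem monotone (hP : IsBandProj P) : Monotone P := fun z w h => by
  simpa using (hP.apply_nonneg_and_apply_le (sub_nonneg.2 h)).1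

theorem le_apply_of_le_of_le_apply (hP : IsBandProj P) {x y z : X} (hy : 0 ≤ y) (hzy : z ≤ y)
    (hzx : z ≤ P x) : z ≤ P y :=
  (hP.udisjoint_sub_apply y x).le_of_le_of_le_add (hP.apply_nonneg_and_apply_le hy).1 hzx
    (by rwa [add_sub_cancel])

end IsBandProj

section ListProd

variable {L : List (X →ₗ[ℝ] X)} {x : X}

theorem list_prod_apply_nonneg_and_le (hL : ∀ Q ∈ L, IsBandProj Q) (hx : 0 ≤ x) :
    0 ≤ L.prod x ∧ L.prod x ≤ x := by
  induction L with
  | nil => simpa using hx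
  | cons Q T ih =>
    obtain ⟨hy, hyx⟩ := ih fun R hR => hL R (List.mem_cons_of_mem Q hR)
    obtain ⟨hQy, hQyy⟩ := (hL Q List.mem_cons_self).apply_nonneg_and_apply_le hy
    simpa [List.prod_cons] using ⟨hQy, hQyy.trans hyx⟩

theorem list_prod_apply_le_apply (hL : ∀ Q ∈ L, IsBandProj Q) (hx : 0 ≤ x) :
    ∀ R ∈ L, L.prod x ≤ R x := by
  induction L with
  | nil => simp
  | cons Q T ih =>
    have hT : ∀ R ∈ T, IsBandProj R := fun R hR => hL R (List.mem_cons_of_mem Q hR)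
    have hQ := hL Q List.mem_cons_self
    obtain ⟨hy, hyx⟩ := list_prod_apply_nonneg_and_le hT hx
    simp only [List.prod_cons, Module.End.mul_apply, List.forall_mem_cons]
    exact ⟨hQ.monotone hyx,
      fun R hR => (hQ.apply_nonneg_and_apply_le hy).2.trans (ih hT R hR)⟩

theorem le_list_prod_apply (hL : ∀ Q ∈ L, IsBandProj Q) (hx : 0 ≤ x) {z : X} (hzx : z ≤ x)
    (hz : ∀ Q ∈ L, z ≤ Q x) : z ≤ L.prod x := by
  induction L with
  | nil => simpa using hzx
  | cons Q T ih =>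
    have hT : ∀ R ∈ T, IsBandProj R := fun R hR => hL R (List.mem_cons_of_mem Q hR)
    simp only [List.forall_mem_cons] at hz
    simpa [List.prod_cons] using (hL Q List.mem_cons_self).le_apply_of_le_of_le_apply
      (list_prod_apply_nonneg_and_le hT hx).1 (ih hT hz.2) hz.1

end ListProd

theorem stmt_9_general {n : ℕ} (hn : 0 < n) (P : Fin n → (X →ₗ[ℝ] X))
    (hP : ∀ i, IsBandProj (P i)) (x : X) (hx : 0 ≤ x) :
    (∀ z : X, (∀ i, z ≤ P i x) → z ≤ (List.ofFn P).prod x) ∧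
    IsGLB (Set.range fun i => P i x) ((List.ofFn P).prod x) := by
  have hL : ∀ Q ∈ List.ofFn P, IsBandProj Q := by
    simp only [List.mem_ofFn, forall_exists_index, forall_apply_eq_imp_iff]
    exact hP
  have hlower : ∀ z : X, (∀ i, z ≤ P i x) → z ≤ (List.ofFn P).prod x := fun z hz =>
    le_list_prod_apply hL hx ((hz ⟨0, hn⟩).trans ((hP _).apply_nonneg_and_apply_le hx).2)
      (by simpa [List.mem_ofFn] using hz)
  refine ⟨hlower, ?_, fun z hz => hlower z fun i => hz ⟨i, rfl⟩⟩
  rintro _ ⟨i, rfl⟩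
  exact list_prod_apply_le_apply hL hx _ (List.mem_ofFn.2 ⟨i, rfl⟩)

/-- For band projections `P₁, …, Pₙ` and `x ∈ X₊`: (a) any common lower bound of the
`Pᵢ x` lies below `P₁ ⋯ Pₙ x`; (b) `P₁ ⋯ Pₙ x` is the infimum of `{P₁ x, …, Pₙ x}`. -/
theorem stmt_9 (hX : IsPreRiesz X) {n : ℕ} (hn : 0 < n) (P : Fin n → (X →ₗ[ℝ] X))
    (hP : ∀ i, IsBandProj (P i)) (x : X) (hx : 0 ≤ x) :
    (∀ z : X, (∀ i, z ≤ P i x) → z ≤ (List.ofFn P).prod x) ∧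
    IsGLB (Set.range fun i => P i x) ((List.ofFn P).prod x) :=
  stmt_9_general hn P hP x hx
end

section
/- Let X be a pre-Riesz space and let P₁, …, P_m : X → X be band projections such that P_i P_j = 0 whenever i ≠ j. Then P₁ + ⋯ + P_m is also a band projection. -/
/-!
In a pre-Riesz space the band projections are exactly the idempotent operators `P` with `P ≥ 0`
and `1 - P ≥ 0`. Positivity of `P` and `1 - P` alone makes the kernel disjoint from the range,
because an upper bound `z` of two elements `u, v` dominates `P u + (1 - P) v`
(as `z = P z + (1 - P) z`); the pre-Riesz property is what forces every element disjoint from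
the range into the kernel. For pairwise orthogonal such `Pᵢ`, the sum `∑ Pᵢ` is again idempotent
and positive, and `1 - ∑ Pᵢ = ∏ (1 - Pᵢ)` is positive as a product of positive operators.
-/

open Pointwise

variable {X : Type*} [AddCommGroup X] [PartialOrder X] [IsOrderedAddMonoid X] [Module ℝ X]
    [PosSMulStrictMono ℝ X]

section

variable {E : Type*} [AddCommGroup E] [PartialOrder E]

lemma uDisjoint_iff {x y : E} :
    UDisjoint x y ↔ ∀ z, (x + y ≤ z ∧ -x - y ≤ z ↔ x - y ≤ z ∧ y - x ≤ z) := by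
  simp only [UDisjoint, Set.ext_iff, upperBounds_insert, upperBounds_singleton, Set.mem_inter_iff,
    Set.mem_Ici]

variable [Module ℝ E]

lemma nonneg_of_nonneg_add_self [PosSMulStrictMono ℝ E] {y : E} (h : 0 ≤ y + y) : 0 ≤ y := by
  rw [← two_smul ℝ] at h
  exact (smul_nonneg_iff_nonneg_of_pos_left two_pos).1 h

lemma IsPosMap.one : IsPosMap (1 : Module.End ℝ E) := fun _ hx => hx

lemma IsPosMap.mul {S T : Module.End ℝ E} (hS : IsPosMap S) (hT : IsPosMap T) :
    IsPosMap (S * T) :=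
  fun x hx => hS _ (hT x hx)

lemma isPosMap_one_sub_sum {ι : Type*} {P : ι → Module.End ℝ E}
    (hP : Pairwise (P · * P · = 0)) (hpos : ∀ i, IsPosMap (1 - P i)) (s : Finset ι) :
    IsPosMap (1 - ∑ i ∈ s, P i) := by
  induction s using Finset.cons_induction with
  | empty => simpa using IsPosMap.one
  | cons j s hj ih =>
    have hfactor : 1 - ∑ i ∈ s.cons j hj, P i = (1 - ∑ i ∈ s, P i) * (1 - P j) := by
      have hsum : (∑ i ∈ s, P i) * P j = 0 :=
        Finset.sum_mul s P (P j) ▸ Finset.sum_eq_zero fun i hi => hP (ne_of_mem_of_not_mem hi hj)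
      rw [Finset.sum_cons, mul_sub, mul_one, sub_mul, one_mul, hsum]
      abel
    exact hfactor ▸ ih.mul (hpos j)

variable [IsOrderedAddMonoid E]

lemma IsPosMap.sum {ι : Type*} {s : Finset ι} {T : ι → Module.End ℝ E}
    (hT : ∀ i ∈ s, IsPosMap (T i)) : IsPosMap (∑ i ∈ s, T i) := fun x hx => by
  rw [LinearMap.sum_apply]
  exact Finset.sum_nonneg fun i hi => hT i hi x hx

lemma UDisjoint.nonneg_of_nonneg_add [PosSMulStrictMono ℝ E] {x y : E} (h : UDisjoint x y)
    (hxy : 0 ≤ x + y) : 0 ≤ x ∧ 0 ≤ y := by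
  have hneg : -x - y ≤ x + y := by
    rw [← neg_add']
    exact (neg_nonpos.2 hxy).trans hxy
  obtain ⟨hxy', hyx'⟩ := (uDisjoint_iff.1 h (x + y)).1 ⟨le_rfl, hneg⟩
  constructor <;> apply nonneg_of_nonneg_add_self
  · rw [← sub_nonneg] at hyx'
    convert hyx' using 1; abel
  · rw [← sub_nonneg] at hxy'
    convert hxy' using 1; abel

lemma isPosMap_one_sub_iff {P : Module.End ℝ E} : IsPosMap (1 - P) ↔ ∀ x, 0 ≤ x → P x ≤ x := by
  simp only [IsPosMap, LinearMap.sub_apply, Module.End.one_apply, sub_nonneg]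

lemma IsBandProj.isPosMap [PosSMulStrictMono ℝ E] {P : Module.End ℝ E} (h : IsBandProj P) :
    IsPosMap P ∧ IsPosMap (1 - P) := by
  obtain ⟨hPP, ⟨-, -, hdecomp⟩, hker⟩ := h
  suffices ∀ x, 0 ≤ x → 0 ≤ P x ∧ P x ≤ x from
    ⟨fun x hx => (this x hx).1, isPosMap_one_sub_iff.2 fun x hx => (this x hx).2⟩
  intro x hx
  obtain ⟨_, ⟨y, rfl⟩, c, hc, rfl⟩ := hdecomp x
  have hPc : P c = 0 := by
    rw [← hker] at hc
    exact hc
  have hPx : P (P y + c) = P y := by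
    rw [map_add, hPc, add_zero]
    exact LinearMap.congr_fun hPP y
  obtain ⟨hc₀, hy₀⟩ := (hc (P y) ⟨y, rfl⟩).nonneg_of_nonneg_add (add_comm (P y) c ▸ hx)
  rw [hPx]
  exact ⟨hy₀, le_add_of_nonneg_right hc₀⟩

lemma map_add_sub_map_le {P : Module.End ℝ E} (hP : IsPosMap P) (hQ : IsPosMap (1 - P))
    {u v z : E} (hu : u ≤ z) (hv : v ≤ z) : P u + (v - P v) ≤ z := by
  have hsplit : z - (P u + (v - P v)) = P (z - u) + (1 - P) (z - v) := by
    simp only [map_sub, LinearMap.sub_apply, Module.End.one_apply]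
    abel
  rw [← sub_nonneg, hsplit]
  exact add_nonneg (hP _ (sub_nonneg.2 hu)) (hQ _ (sub_nonneg.2 hv))

lemma uDisjoint_of_map_eq_zero_of_map_eq_self {P : Module.End ℝ E} (hP : IsPosMap P)
    (hQ : IsPosMap (1 - P)) {b c : E} (hb : P b = b) (hc : P c = 0) : UDisjoint c b := by
  have hmix : ∀ {u v w z}, u ≤ z → v ≤ z → P u + (v - P v) = w → w ≤ z :=
    fun hu hv hw => hw ▸ map_add_sub_map_le hP hQ hu hv
  refine uDisjoint_iff.2 fun z => ⟨fun ⟨h₁, h₂⟩ => ⟨hmix h₂ h₁ ?_, hmix h₁ h₂ ?_⟩,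
    fun ⟨h₁, h₂⟩ => ⟨hmix h₂ h₁ ?_, hmix h₁ h₂ ?_⟩⟩ <;>
  · simp only [map_add, map_sub, map_neg, hb, hc]
    abel

variable [PosSMulStrictMono ℝ E]

/- With `b = P d` and `A = {-d - b, d - b}`, an upper bound of `2b + A = {b - d, b + d}` dominates
`d - b` by positivity of `P` and `1 - P`, hence `-d - b` by disjointness of `d` and `b`; so it
bounds `A`, and the pre-Riesz property gives `2b ≥ 0`. -/
lemma nonneg_apply_of_mem_dComp_range (hX : IsPreRiesz E) {P : Module.End ℝ E}
    (hPP : IsIdempotentElem P) (hP : IsPosMap P) (hQ : IsPosMap (1 - P)) {d : E}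
    (hd : d ∈ dComp (Set.range P)) : 0 ≤ P d := by
  set b := P d
  have hb : P b = b := LinearMap.congr_fun hPP d
  refine nonneg_of_nonneg_add_self (hX {-d - b, d - b} (b + b) (Set.toFinite _)
    (Set.insert_nonempty _ _) fun z hz => ?_)
  simp only [Set.image_insert_eq, Set.image_singleton, upperBounds_insert, upperBounds_singleton,
    Set.mem_inter_iff, Set.mem_Ici] at hz ⊢
  have hdb : d - b ≤ z := by
    convert map_add_sub_map_le hP hQ hz.1 hz.2 using 1
    simp only [map_add, map_sub, map_neg, hb]; abel
  have hbd : b - d ≤ z := by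
    convert hz.1 using 1; abel
  exact ⟨((uDisjoint_iff.1 (hd b ⟨d, rfl⟩) z).2 ⟨hdb, hbd⟩).2, hdb⟩

lemma ker_eq_dComp_range (hX : IsPreRiesz E) {P : Module.End ℝ E} (hPP : IsIdempotentElem P)
    (hP : IsPosMap P) (hQ : IsPosMap (1 - P)) :
    (LinearMap.ker P : Set E) = dComp (Set.range P) := by
  ext c
  constructor
  · rintro hc _ ⟨y, rfl⟩
    exact uDisjoint_of_map_eq_zero_of_map_eq_self hP hQ (LinearMap.congr_fun hPP y) hc
  · intro hc
    have hneg : -c ∈ dComp (Set.range P) := fun s hs => (hc s hs).neg_left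
    have h₁ := nonneg_apply_of_mem_dComp_range hX hPP hP hQ hc
    have h₂ := nonneg_apply_of_mem_dComp_range hX hPP hP hQ hneg
    rw [map_neg, neg_nonneg] at h₂
    exact le_antisymm h₂ h₁

lemma isBandProj_of_isPosMap (hX : IsPreRiesz E) {P : Module.End ℝ E} (hPP : IsIdempotentElem P)
    (hP : IsPosMap P) (hQ : IsPosMap (1 - P)) : IsBandProj P := by
  have hker := ker_eq_dComp_range hX hPP hP hQ
  have hker' := ker_eq_dComp_range hX hPP.one_sub hQ (by rwa [sub_sub_cancel])
  refine ⟨hPP, ⟨?_, ?_, fun x => ⟨P x, ⟨x, rfl⟩, x - P x, ?_, (add_sub_cancel _ _).symm⟩⟩, hker⟩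
  · calc Set.range P = (LinearMap.ker (1 - P) : Set E) := by
          rw [← LinearMap.IsIdempotentElem.range_eq_ker_one_sub hPP, LinearMap.coe_range]
      _ = dComp (Set.range ⇑(1 - P)) := hker'
      _ = dComp (LinearMap.ker P) := by
          rw [LinearMap.IsIdempotentElem.ker_eq_range_one_sub hPP, LinearMap.coe_range]
      _ = dComp (dComp (Set.range P)) := by rw [hker]
  · rw [← hker, ← LinearMap.coe_range, ← Submodule.coe_inf,
      (LinearMap.IsIdempotentElem.isCompl hPP).inf_eq_bot, Submodule.bot_coe]
  · rw [← hker]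
    have hPx : P (P x) = P x := LinearMap.congr_fun hPP x
    simp [hPx]

lemma isBandProj_iff (hX : IsPreRiesz E) {P : Module.End ℝ E} :
    IsBandProj P ↔ IsIdempotentElem P ∧ IsPosMap P ∧ IsPosMap (1 - P) :=
  ⟨fun h => ⟨h.1, h.isPosMap⟩, fun ⟨hPP, hP, hQ⟩ => isBandProj_of_isPosMap hX hPP hP hQ⟩

end

/-- If band projections `P₁, …, P_m` satisfy `Pᵢ Pⱼ = 0` for `i ≠ j`, then their sum is a
band projection. -/
theorem stmt_15 (hX : IsPreRiesz X) {m : ℕ} (P : Fin m → (X →ₗ[ℝ] X))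
    (hP : ∀ i, IsBandProj (P i)) (hzero : ∀ i j, i ≠ j → P i ∘ₗ P j = 0) :
    IsBandProj (∑ i, P i) := by
  simp only [isBandProj_iff hX] at hP ⊢
  have hP_orth : OrthogonalIdempotents P := ⟨fun i => (hP i).1, hzero⟩
  exact ⟨hP_orth.isIdempotentElem_sum, IsPosMap.sum fun i _ => (hP i).2.1,
    isPosMap_one_sub_sum hzero (fun i => (hP i).2.2) _⟩
end

section
/- Let X be a pre-Riesz space in which every nonempty totally ordered subset that is bounded from above has a supremum. Assume X is weakly pervasive, i.e. any two elements x, y ∈ X₊ with [0,x] ∩ [0,y] = {0} are disjoint. Then X is a vector lattice: any two elements of X have an infimum (equivalently, a supremum) in X. -/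
/-!
By Zorn's lemma, applied to chains of common lower bounds of `x` and `y` (such chains have
suprema, which are again lower bounds), there is a maximal lower bound `m`; the pre-Riesz
property guarantees that lower bounds exist at all. Maximality says exactly that
`[0, x - m] ∩ [0, y - m] = {0}`, so by weak pervasiveness `x - m` and `y - m` are disjoint,
i.e. their infimum is `0`. Translating back, `m` is the infimum of `x` and `y`.
-/

open Pointwise

variable {X : Type*} [AddCommGroup X] [PartialOrder X] [IsOrderedAddMonoid X] [Module ℝ X] [PosSMulStrictMono ℝ X]

open Set

section OrderedAddGroup

variable {G : Type*} [AddCommGroup G] [PartialOrder G] [IsOrderedAddMonoid G]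

lemma isGLB_pair_of_isGLB_sub_pair {x y m : G} (h : IsGLB {x - m, y - m} 0) :
    IsGLB {x, y} m := by
  have := (OrderIso.addRight m).isGLB_image'.2 h
  simpa [image_pair] using this

lemma Icc_inter_Icc_sub_eq_singleton_zero_of_maximal {x y m : G}
    (hm : Maximal (· ∈ lowerBounds {x, y}) m) :
    Icc 0 (x - m) ∩ Icc 0 (y - m) = {0} := by
  refine subset_antisymm ?_ ?_
  · rintro w ⟨⟨hw, hwx⟩, -, hwy⟩
    have hmw : m + w ∈ lowerBounds {x, y} := by
      rintro z (rfl | rfl)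
      · exact le_sub_iff_add_le'.1 hwx
      · exact le_sub_iff_add_le'.1 hwy
    exact le_antisymm (by simpa using hm.2 hmw (le_add_of_nonneg_right hw)) hw
  · rintro _ rfl
    exact ⟨left_mem_Icc.2 (sub_nonneg.2 (hm.1 (mem_insert x {y}))),
      left_mem_Icc.2 (sub_nonneg.2 (hm.1 (mem_insert_of_mem x rfl)))⟩

lemma UDisjoint.isGLB_zero {x y : G} (hx : 0 ≤ x) (hy : 0 ≤ y) (h : UDisjoint x y) :
    IsGLB ({x, y} : Set G) 0 := by
  refine ⟨by rintro z (rfl | rfl) <;> assumption, fun z hz => ?_⟩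
  have hzx : z ≤ x := hz (mem_insert x {y})
  have hzy : z ≤ y := hz (mem_insert_of_mem x rfl)
  -- `x + y - z` bounds `x - y` and `y - x`, so by disjointness it also bounds `-x - y`.
  have hub : x + y - z ∈ upperBounds ({x - y, y - x} : Set G) := by
    rintro w (rfl | rfl)
    · calc x - y = x + y - (y + y) := by abel
        _ ≤ x + y - z := sub_le_sub_left (hzy.trans (le_add_of_nonneg_left hy)) _
    · calc y - x = x + y - (x + x) := by abel
        _ ≤ x + y - z := sub_le_sub_left (hzx.trans (le_add_of_nonneg_left hx)) _
  rw [← h] at hub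
  simpa using sub_nonneg.2 (hub (mem_insert _ _))

end OrderedAddGroup

lemma exists_maximal_mem_lowerBounds {α : Type*} [PartialOrder α]
    (hchain : ∀ C : Set α, C.Nonempty → IsChain (· ≤ ·) C → BddAbove C → ∃ s, IsLUB C s)
    {T : Set α} (hT : T.Nonempty) (hbdd : BddBelow T) :
    ∃ m, Maximal (· ∈ lowerBounds T) m := by
  obtain ⟨l, hl⟩ := hbdd
  obtain ⟨t, ht⟩ := hT
  obtain ⟨m, -, hm⟩ := zorn_le_nonempty₀ (lowerBounds T) (fun C hCT hC c hc => by
    obtain ⟨s, hs⟩ := hchain C ⟨c, hc⟩ hC ⟨t, fun _ hz => hCT hz ht⟩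
    exact ⟨s, fun _ hu => hs.2 fun _ hz => hCT hz hu, fun _ hz => hs.1 hz⟩) l hl
  exact ⟨m, hm⟩

namespace IsPreRiesz

lemma bddAbove_of_finite (hX : IsPreRiesz X) {A : Set X} (hA : A.Finite) : BddAbove A := by
  by_contra hbdd
  obtain ⟨a, ha⟩ : A.Nonempty := nonempty_of_not_bddAbove hbdd
  -- With no upper bounds for `A` nor for its translates, the pre-Riesz condition holds vacuously.
  have hpos : ∀ w : X, 0 ≤ w := fun w => hX A w hA ⟨a, ha⟩ fun u hu =>
    absurd ⟨u - w, fun z hz => le_sub_iff_add_le'.2 (hu ⟨z, hz, rfl⟩)⟩ hbdd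
  exact hbdd ⟨0, fun z _ => neg_nonneg.1 (hpos (-z))⟩

lemma bddBelow_pair (hX : IsPreRiesz X) (x y : X) : BddBelow ({x, y} : Set X) := by
  have := hX.bddAbove_of_finite (toFinite {-x, -y})
  simpa [← bddAbove_neg, neg_insert] using this

end IsPreRiesz

/-- A weakly pervasive pre-Riesz space in which every nonempty totally ordered subset that
is bounded above has a supremum is a vector lattice: any two elements have an infimum. -/
theorem stmt_19 (hX : IsPreRiesz X)
    (hchain : ∀ C : Set X, C.Nonempty → IsChain (· ≤ ·) C → BddAbove C → ∃ s, IsLUB C s)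
    (hwp : ∀ x y : X, 0 ≤ x → 0 ≤ y →
      Set.Icc (0 : X) x ∩ Set.Icc (0 : X) y = {0} → UDisjoint x y) :
    ∀ x y : X, ∃ a, IsGLB ({x, y} : Set X) a := by
  intro x y
  obtain ⟨m, hm⟩ := exists_maximal_mem_lowerBounds hchain (insert_nonempty x {y})
    (hX.bddBelow_pair x y)
  have hxm : 0 ≤ x - m := sub_nonneg.2 (hm.1 (mem_insert x {y}))
  have hym : 0 ≤ y - m := sub_nonneg.2 (hm.1 (mem_insert_of_mem x rfl))
  have hdisj := hwp _ _ hxm hym (Icc_inter_Icc_sub_eq_singleton_zero_of_maximal hm)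
  exact ⟨m, isGLB_pair_of_isGLB_sub_pair (hdisj.isGLB_zero hxm hym)⟩
end
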